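/- arXiv:1906.02702 — 6 statements merged into one kernel-verified Lean document; each statement's English description precedes it below -/
import Mathlib

section
/- For any integers a, k with 1 < a < k and any real γ with 1 < γ ≤ a/2, the product ∏_{t=a}^{k-1} (1 - γ/t) satisfies a^{2γ}/k^{2γ} ≤ ∏_{t=a}^{k-1} (1 - γ/t) ≤ a^γ/k^γ. -/
/-!
Each factor `1 - γ / t` is squeezed, via Bernoulli's inequality `1 + p s ≤ (1 + s) ^ p` for
`p ≥ 1`, between powers of factors of telescoping products:
`(t / (t + 1)) ^ (2γ) ≤ (1 + 2γ / t)⁻¹ ≤ 1 - γ / t`, the last step using `t ≥ 2γ`, and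
`1 - γ / t ≤ ((t - 1) / t) ^ γ`. The products telescope to `a / k` and `(a - 1) / (k - 1) ≤ a / k`.
-/

open Finset

theorem Finset.prod_Ico_div_succ₀ {G₀ : Type*} [CommGroupWithZero G₀] {f : ℕ → G₀}
    {m n : ℕ} (hmn : m ≤ n) (hf : ∀ i, m ≤ i → i ≤ n → f i ≠ 0) :
    ∏ i ∈ Ico m n, f i / f (i + 1) = f m / f n := by
  induction n, hmn using Nat.le_induction with
  | base => simp [div_self (hf m le_rfl le_rfl)]
  | succ n hmn ih =>
    rw [prod_Ico_succ_top hmn, ih fun i hmi hin ↦ hf i hmi (by omega),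
      div_mul_div_cancel₀ (hf n hmn (by omega))]

theorem one_sub_div_le_sub_one_div_rpow {x γ : ℝ} (hx : 1 ≤ x) (hγ : 1 ≤ γ) :
    1 - γ / x ≤ ((x - 1) / x) ^ γ := by
  have hx₀ : x ≠ 0 := by positivity
  have bernoulli := one_add_mul_self_le_rpow_one_add
    (neg_le_neg (inv_le_one_of_one_le₀ hx)) hγ
  convert bernoulli using 2 <;> field_simp <;> ring

theorem div_add_one_rpow_two_mul_le_one_sub_div {x γ : ℝ} (hγ : 1 ≤ 2 * γ) (hγx : 2 * γ ≤ x) :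
    (x / (x + 1)) ^ (2 * γ) ≤ 1 - γ / x := by
  have hx : 0 < x := by linarith
  have hγx' : 0 < 1 - γ / x := by rw [sub_pos, div_lt_one hx]; linarith
  have bernoulli := one_add_mul_self_le_rpow_one_add
    (by linarith [inv_pos.mpr hx] : -1 ≤ x⁻¹) hγ
  have h : (1 - γ / x)⁻¹ ≤ 1 + 2 * γ * x⁻¹ := by
    rw [inv_le_iff_one_le_mul₀ hγx']
    field_simp
    nlinarith
  rw [show x / (x + 1) = (1 + x⁻¹)⁻¹ by field_simp, Real.inv_rpow (by positivity)]
  exact inv_le_of_inv_le₀ hγx' (h.trans bernoulli)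

theorem div_rpow_two_mul_le_prod_one_sub_div {a k : ℕ} {γ : ℝ} (hak : a ≤ k) (hγ : 1 ≤ 2 * γ)
    (hγa : 2 * γ ≤ a) :
    ((a : ℝ) / k) ^ (2 * γ) ≤ ∏ t ∈ Ico a k, (1 - γ / t) := by
  have ha : 0 < a := by exact_mod_cast (zero_lt_one.trans_le hγ).trans_le hγa
  have h_le : ∀ t ∈ Ico a k, 2 * γ ≤ (t : ℝ) := fun t ht ↦
    hγa.trans (by exact_mod_cast (mem_Ico.mp ht).1)
  have h_telescope : ∏ t ∈ Ico a k, (t : ℝ) / (t + 1) = a / k := by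
    simpa using prod_Ico_div_succ₀ (f := fun t : ℕ ↦ (t : ℝ)) hak
      fun i hi _ ↦ Nat.cast_ne_zero.mpr (by omega)
  calc ((a : ℝ) / k) ^ (2 * γ)
      = ∏ t ∈ Ico a k, ((t : ℝ) / (t + 1)) ^ (2 * γ) := by
        rw [Real.finsetProd_rpow _ _ fun t _ ↦ by positivity, h_telescope]
    _ ≤ ∏ t ∈ Ico a k, (1 - γ / t) :=
        prod_le_prod (fun t _ ↦ by positivity)
          fun t ht ↦ div_add_one_rpow_two_mul_le_one_sub_div hγ (h_le t ht)

theorem prod_one_sub_div_le_div_rpow {a k : ℕ} {γ : ℝ} (ha : 1 < a) (hak : a ≤ k) (hγ : 1 ≤ γ)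
    (hγa : γ ≤ a) :
    ∏ t ∈ Ico a k, (1 - γ / t) ≤ ((a : ℝ) / k) ^ γ := by
  have ha' : (1 : ℝ) < a := by exact_mod_cast ha
  have hak' : (a : ℝ) ≤ k := by exact_mod_cast hak
  have h_le : ∀ t ∈ Ico a k, (a : ℝ) ≤ t := fun t ht ↦ by exact_mod_cast (mem_Ico.mp ht).1
  have h_telescope : ∏ t ∈ Ico a k, ((t : ℝ) - 1) / t = (a - 1) / (k - 1) := by
    simpa using prod_Ico_div_succ₀ (f := fun t : ℕ ↦ (t : ℝ) - 1) hak
      fun i hi _ ↦ sub_ne_zero.mpr (by exact_mod_cast (by omega : i ≠ 1))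
  calc ∏ t ∈ Ico a k, (1 - γ / t)
      ≤ ∏ t ∈ Ico a k, (((t : ℝ) - 1) / t) ^ γ := by
        refine prod_le_prod (fun t ht ↦ ?_) fun t ht ↦ ?_
        · have := h_le t ht
          rw [sub_nonneg, div_le_one (by linarith)]
          linarith
        · exact one_sub_div_le_sub_one_div_rpow (by linarith [h_le t ht]) hγ
    _ = (((a : ℝ) - 1) / (k - 1)) ^ γ := by
        rw [Real.finsetProd_rpow _ _ fun t ht ↦ div_nonneg (by linarith [h_le t ht])
          (by linarith [h_le t ht]), h_telescope]
    _ ≤ ((a : ℝ) / k) ^ γ := by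
        refine Real.rpow_le_rpow (div_nonneg (by linarith) (by linarith)) ?_ (by linarith)
        rw [div_le_div_iff₀ (by linarith) (by linarith)]
        linarith

theorem stmt0 (a k : ℕ) (γ : ℝ) (ha : 1 < a) (hk : a < k)
    (hγ1 : 1 < γ) (hγ2 : γ ≤ (a : ℝ) / 2) :
    (a : ℝ) ^ (2 * γ) / (k : ℝ) ^ (2 * γ) ≤ ∏ t ∈ Finset.Ico a k, (1 - γ / (t : ℝ)) ∧
    ∏ t ∈ Finset.Ico a k, (1 - γ / (t : ℝ)) ≤ (a : ℝ) ^ γ / (k : ℝ) ^ γ := by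
  rw [← Real.div_rpow (Nat.cast_nonneg a) (Nat.cast_nonneg k),
    ← Real.div_rpow (Nat.cast_nonneg a) (Nat.cast_nonneg k)]
  exact ⟨div_rpow_two_mul_le_prod_one_sub_div hk.le (by linarith) (by linarith),
    prod_one_sub_div_le_div_rpow ha hk.le hγ1.le (by linarith)⟩
end

section
/- Let g_1, ..., g_n be independent random vectors in ℝ^p with E[g_i] = ∇f_i(x_i) and E[‖g_i - ∇f_i(x_i)‖²] ≤ σ² + M‖∇f_i(x_i)‖², where each f_i has L-Lipschitz gradient. Let x_* be any point. Then E[‖(1/n)∑_i g_i - (1/n)∑_i ∇f_i(x_i)‖²] ≤ (2ML²/n²)∑_i ‖x_i - x_*‖² + (1/n)(2M(1/n)∑_i ‖∇f_i(x_*)‖² + σ²). -/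
open MeasureTheory ProbabilityTheory
open scoped RealInnerProductSpace

/-!
Centre each estimator, `Y i = g i - ∇f_i(x_i)`. The `Y i` are independent with mean zero, so the
cross terms `E⟪Y i, Y j⟫ = ⟪E Y i, E Y j⟫` vanish and the variance of the average is `1/n²` times
the sum of the individual variances. Each of these is at most `σ² + M‖∇f_i(x_i)‖²`, and
`‖∇f_i(x_i)‖² ≤ 2L²‖x_i - x_*‖² + 2‖∇f_i(x_*)‖²` by the Lipschitz bound.
-/

section Variance

variable {ι Ω E : Type*} [Fintype ι] [MeasurableSpace Ω] {μ : Measure Ω}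
  [NormedAddCommGroup E] [InnerProductSpace ℝ E] [CompleteSpace E]
  [MeasurableSpace E] [BorelSpace E]

lemma integral_inner_eq_zero_of_indepFun {X Y : Ω → E} (hXY : IndepFun X Y μ)
    (hX : Integrable X μ) (hY : Integrable Y μ) (hX0 : μ[X] = 0) :
    ∫ ω, ⟪X ω, Y ω⟫ ∂μ = 0 :=
  (hXY.integral_bilin hX hY (innerSL ℝ)).trans (by simp [hX0])

lemma integral_norm_sum_sq_eq_sum_of_pairwise_indepFun {Y : ι → Ω → E}
    (hindep : Pairwise fun i j ↦ IndepFun (Y i) (Y j) μ)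
    (hint : ∀ i, Integrable (Y i) μ) (hint2 : ∀ i, Integrable (fun ω ↦ ‖Y i ω‖ ^ 2) μ)
    (hmean : ∀ i, μ[Y i] = 0) :
    ∫ ω, ‖∑ i, Y i ω‖ ^ 2 ∂μ = ∑ i, ∫ ω, ‖Y i ω‖ ^ 2 ∂μ := by
  have hint_inner : ∀ i j, Integrable (fun ω ↦ ⟪Y i ω, Y j ω⟫) μ := by
    intro i j
    rcases eq_or_ne i j with rfl | hij
    · simpa only [real_inner_self_eq_norm_sq] using hint2 i
    · exact (hindep hij).integrable_bilin (hint i) (hint j) (innerSL ℝ)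
  calc ∫ ω, ‖∑ i, Y i ω‖ ^ 2 ∂μ = ∫ ω, ∑ i, ∑ j, ⟪Y i ω, Y j ω⟫ ∂μ := by
        congr 1 with ω
        rw [← real_inner_self_eq_norm_sq, sum_inner]
        simp only [inner_sum]
    _ = ∑ i, ∑ j, ∫ ω, ⟪Y i ω, Y j ω⟫ ∂μ := by
        rw [integral_finsetSum _ fun i _ ↦ integrable_finsetSum _ fun j _ ↦ hint_inner i j]
        exact Finset.sum_congr rfl fun i _ ↦ integral_finsetSum _ fun j _ ↦ hint_inner i j
    _ = ∑ i, ∫ ω, ⟪Y i ω, Y i ω⟫ ∂μ := by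
        refine Finset.sum_congr rfl fun i _ ↦ Finset.sum_eq_single i (fun j _ hji ↦ ?_) (by simp)
        exact integral_inner_eq_zero_of_indepFun (hindep hji.symm) (hint i) (hint j) (hmean i)
    _ = ∑ i, ∫ ω, ‖Y i ω‖ ^ 2 ∂μ := by
        simp only [real_inner_self_eq_norm_sq]

end Variance

lemma norm_sq_le_of_norm_sub_le {E : Type*} [SeminormedAddCommGroup E] {a b : E} {r : ℝ}
    (h : ‖a - b‖ ≤ r) : ‖a‖ ^ 2 ≤ 2 * r ^ 2 + 2 * ‖b‖ ^ 2 := by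
  have hr : 0 ≤ r := (norm_nonneg _).trans h
  have ha : ‖a‖ ≤ r + ‖b‖ := (norm_le_norm_sub_add a b).trans (by linarith)
  calc ‖a‖ ^ 2 ≤ (r + ‖b‖) ^ 2 := pow_le_pow_left₀ (norm_nonneg _) ha 2
    _ ≤ 2 * r ^ 2 + 2 * ‖b‖ ^ 2 := by linarith [add_sq_le (a := r) (b := ‖b‖)]

theorem stmt4_general {p n : ℕ}
    {Ω : Type*} [MeasureSpace Ω] [IsProbabilityMeasure (ℙ : Measure Ω)]
    (g : Fin n → Ω → EuclideanSpace ℝ (Fin p))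
    (grad : Fin n → EuclideanSpace ℝ (Fin p) → EuclideanSpace ℝ (Fin p))
    (L σ M : ℝ) (hM : 0 < M)
    (hlip : ∀ i x y, ‖grad i x - grad i y‖ ≤ L * ‖x - y‖)
    (x : Fin n → EuclideanSpace ℝ (Fin p)) (xs : EuclideanSpace ℝ (Fin p))
    (hindep : iIndepFun g ℙ)
    (hint : ∀ i, Integrable (g i) ℙ)
    (hint2 : ∀ i, Integrable (fun ω => ‖g i ω - grad i (x i)‖ ^ 2) ℙ)
    (hmean : ∀ i, (∫ ω, g i ω ∂ℙ) = grad i (x i))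
    (hvar : ∀ i, (∫ ω, ‖g i ω - grad i (x i)‖ ^ 2 ∂ℙ) ≤ σ ^ 2 + M * ‖grad i (x i)‖ ^ 2) :
    (∫ ω, ‖(n : ℝ)⁻¹ • ∑ i, g i ω - (n : ℝ)⁻¹ • ∑ i, grad i (x i)‖ ^ 2 ∂ℙ) ≤
      2 * M * L ^ 2 / (n : ℝ) ^ 2 * ∑ i, ‖x i - xs‖ ^ 2 +
      (1 / (n : ℝ)) * (2 * M * ((n : ℝ)⁻¹ * ∑ i, ‖grad i xs‖ ^ 2) + σ ^ 2) := by
  set Y : Fin n → Ω → EuclideanSpace ℝ (Fin p) := fun i ω ↦ g i ω - grad i (x i)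
  have hY_indep : Pairwise fun i j ↦ IndepFun (Y i) (Y j) ℙ := fun i j hij ↦
    (hindep.comp (fun i v ↦ v - grad i (x i)) fun _ ↦ measurable_id.sub_const _).indepFun hij
  have hY_int : ∀ i, Integrable (Y i) ℙ := fun i ↦ (hint i).sub (integrable_const _)
  have hY_mean : ∀ i, ℙ[Y i] = 0 := fun i ↦ by
    simp [Y, integral_sub (hint i) (integrable_const _), hmean i]
  have hY_var : ∀ i, ∫ ω, ‖Y i ω‖ ^ 2 ≤
      σ ^ 2 + 2 * M * L ^ 2 * ‖x i - xs‖ ^ 2 + 2 * M * ‖grad i xs‖ ^ 2 := fun i ↦ by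
    nlinarith [hvar i, norm_sq_le_of_norm_sub_le (hlip i (x i) xs)]
  have hLHS : ∀ ω, ‖(n : ℝ)⁻¹ • ∑ i, g i ω - (n : ℝ)⁻¹ • ∑ i, grad i (x i)‖ ^ 2 =
      ((n : ℝ)⁻¹) ^ 2 * ‖∑ i, Y i ω‖ ^ 2 := fun ω ↦ by
    rw [← smul_sub, ← Finset.sum_sub_distrib, norm_smul, mul_pow, norm_inv, RCLike.norm_natCast]
  calc _ = ((n : ℝ)⁻¹) ^ 2 * ∑ i, ∫ ω, ‖Y i ω‖ ^ 2 := by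
        simp only [hLHS, integral_const_mul,
          integral_norm_sum_sq_eq_sum_of_pairwise_indepFun hY_indep hY_int hint2 hY_mean]
    _ ≤ ((n : ℝ)⁻¹) ^ 2 *
        ∑ i, (σ ^ 2 + 2 * M * L ^ 2 * ‖x i - xs‖ ^ 2 + 2 * M * ‖grad i xs‖ ^ 2) := by
        gcongr with i
        exact hY_var i
    _ = _ := by
        rcases eq_or_ne (n : ℝ) 0 with hn0 | hn0
        · simp [hn0]
        · simp only [Finset.sum_add_distrib, ← Finset.mul_sum, Finset.sum_const,
            Finset.card_univ, Fintype.card_fin, nsmul_eq_mul]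
          field_simp
          ring

theorem stmt4 {p n : ℕ} (hn : 0 < n)
    {Ω : Type*} [MeasureSpace Ω] [IsProbabilityMeasure (ℙ : Measure Ω)]
    (g : Fin n → Ω → EuclideanSpace ℝ (Fin p))
    (f : Fin n → EuclideanSpace ℝ (Fin p) → ℝ)
    (grad : Fin n → EuclideanSpace ℝ (Fin p) → EuclideanSpace ℝ (Fin p))
    (L σ M : ℝ) (hσ : 0 < σ) (hM : 0 < M)
    (hgrad : ∀ i x, HasGradientAt (f i) (grad i x) x)
    (hlip : ∀ i x y, ‖grad i x - grad i y‖ ≤ L * ‖x - y‖)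
    (x : Fin n → EuclideanSpace ℝ (Fin p)) (xs : EuclideanSpace ℝ (Fin p))
    (hindep : iIndepFun g ℙ)
    (hint : ∀ i, Integrable (g i) ℙ)
    (hint2 : ∀ i, Integrable (fun ω => ‖g i ω - grad i (x i)‖ ^ 2) ℙ)
    (hmean : ∀ i, (∫ ω, g i ω ∂ℙ) = grad i (x i))
    (hvar : ∀ i, (∫ ω, ‖g i ω - grad i (x i)‖ ^ 2 ∂ℙ) ≤ σ ^ 2 + M * ‖grad i (x i)‖ ^ 2) :
    (∫ ω, ‖(n : ℝ)⁻¹ • ∑ i, g i ω - (n : ℝ)⁻¹ • ∑ i, grad i (x i)‖ ^ 2 ∂ℙ) ≤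
      2 * M * L ^ 2 / (n : ℝ) ^ 2 * ∑ i, ‖x i - xs‖ ^ 2 +
      (1 / (n : ℝ)) * (2 * M * ((n : ℝ)⁻¹ * ∑ i, ‖grad i xs‖ ^ 2) + σ ^ 2) :=
  stmt4_general g grad L σ M hM hlip x xs hindep hint hint2 hmean hvar
end

section
/- Let θ > 2 and let a ≥ 4θ be an integer. Then for all integers b with b > a, ∑_{t=a}^{b} (t+1)^{1.5θ}/t² ≤ b^{1.5θ-1}/(1.5θ - 1) + 3b^{1.5θ-2}/(1.5θ - 2) + 3b^{1.5θ-2}. -/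
open Finset Real

/-!
With `s = 1.5θ` we have `t ≥ a ≥ 8s/3`, so `s/t ≤ 3/8` and
`(1 + 1/t)^s ≤ exp (s/t) ≤ 1 + (11/8)(s/t)`; hence each term is at most
`t^(s-2) + (11/8) s t^(s-3)`. Summing, `∑_{t ≤ b} t^c ≤ b^c + b^(c+1)/(c+1)` (Bernoulli's
inequality drives the induction), and the lower-order terms are absorbed using `s ≤ 3b/8` and
`s/(s-2) = 1 + 2/(s-2)`.
-/

lemma one_add_rpow_le_exp_mul {x s : ℝ} (hx : -1 ≤ x) (hs : 0 ≤ s) :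
    (1 + x) ^ s ≤ exp (x * s) := by
  rw [exp_mul]
  exact rpow_le_rpow (by linarith) (by linarith [add_one_le_exp x]) hs

lemma exp_le_one_add_mul_of_le {x : ℝ} (hx₀ : 0 ≤ x) (hx : x ≤ 3 / 8) :
    exp x ≤ 1 + 11 / 8 * x := by
  have hquad : exp x - 1 - x ≤ x ^ 2 :=
    (le_abs_self _).trans (abs_exp_sub_one_sub_id_le (by rw [abs_of_nonneg hx₀]; linarith))
  nlinarith

lemma add_one_rpow_div_sq_le {t s : ℝ} (ht : 0 < t) (hs₀ : 0 ≤ s) (hs : s ≤ 3 / 8 * t) :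
    (t + 1) ^ s / t ^ 2 ≤ t ^ (s - 2) + 11 / 8 * s * t ^ (s - 3) := by
  have hst : s / t ≤ 3 / 8 := by rw [div_le_iff₀ ht]; linarith
  have hfactor : (t + 1) ^ s = t ^ s * (1 + t⁻¹) ^ s := by
    rw [← mul_rpow ht.le (by positivity), mul_add, mul_inv_cancel₀ ht.ne', mul_one]
  have hbound : (1 + t⁻¹) ^ s ≤ 1 + 11 / 8 * (s / t) :=
    calc (1 + t⁻¹) ^ s ≤ exp (t⁻¹ * s) :=
          one_add_rpow_le_exp_mul (by linarith [inv_pos.2 ht]) hs₀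
      _ = exp (s / t) := by rw [inv_mul_eq_div]
      _ ≤ 1 + 11 / 8 * (s / t) := exp_le_one_add_mul_of_le (by positivity) hst
  have hpow (n : ℕ) : t ^ (s - n) = t ^ s / t ^ n := by rw [rpow_sub ht, rpow_natCast]
  calc (t + 1) ^ s / t ^ 2 ≤ t ^ s * (1 + 11 / 8 * (s / t)) / t ^ 2 := by
        rw [hfactor]; gcongr
    _ = t ^ (s - 2) + 11 / 8 * s * t ^ (s - 3) := by
        rw [show (2 : ℝ) = (2 : ℕ) by norm_num, show (3 : ℝ) = (3 : ℕ) by norm_num, hpow, hpow]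
        field_simp

lemma mul_rpow_add_rpow_le_add_one_rpow {x c : ℝ} (hx : 0 < x) (hc : 0 ≤ c) :
    (c + 1) * x ^ c + x ^ (c + 1) ≤ (x + 1) ^ (c + 1) := by
  have hbern : 1 + (c + 1) * x⁻¹ ≤ (1 + x⁻¹) ^ (c + 1) :=
    one_add_mul_self_le_rpow_one_add (by linarith [inv_pos.2 hx]) (by linarith)
  have hfactor : (x + 1) ^ (c + 1) = x ^ (c + 1) * (1 + x⁻¹) ^ (c + 1) := by
    rw [← mul_rpow hx.le (by positivity), mul_add, mul_inv_cancel₀ hx.ne', mul_one]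
  calc (c + 1) * x ^ c + x ^ (c + 1) = x ^ (c + 1) * (1 + (c + 1) * x⁻¹) := by
        rw [rpow_add_one hx.ne']; field_simp; ring
    _ ≤ (x + 1) ^ (c + 1) := by rw [hfactor]; gcongr

lemma sum_Icc_rpow_le {c : ℝ} (hc : 0 ≤ c) {a b : ℕ} (ha : 1 ≤ a) (hab : a ≤ b) :
    ∑ t ∈ Icc a b, (t : ℝ) ^ c ≤ (b : ℝ) ^ c + (b : ℝ) ^ (c + 1) / (c + 1) := by
  induction b, hab using Nat.le_induction with
  | base => rw [Icc_self, sum_singleton]; exact le_add_of_nonneg_right (by positivity)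
  | succ b hab ih =>
    have hb : (0 : ℝ) < b := by exact_mod_cast ha.trans hab
    have hstep := mul_rpow_add_rpow_le_add_one_rpow hb hc
    rw [sum_Icc_succ_top (by omega), Nat.cast_succ]
    have : (b : ℝ) ^ c + (b : ℝ) ^ (c + 1) / (c + 1) ≤ ((b : ℝ) + 1) ^ (c + 1) / (c + 1) := by
      rw [le_div_iff₀ (by linarith), add_mul, div_mul_cancel₀ _ (by linarith)]; linarith
    linarith

lemma add_mul_add_div_le {s B B' : ℝ} (hs : 2 < s) (hB : 0 ≤ B) (hB' : s * B' ≤ 3 / 8 * B) :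
    B + 11 / 8 * s * (B' + B / (s - 2)) ≤ 3 * B / (s - 2) + 3 * B := by
  have hsplit : s * (B / (s - 2)) = B + 2 * (B / (s - 2)) := by
    field_simp [(sub_pos.2 hs).ne']; ring
  have : 0 ≤ B / (s - 2) := div_nonneg hB (by linarith)
  rw [mul_div_assoc]
  linarith

theorem stmt7 (θ : ℝ) (hθ : 2 < θ) (a b : ℕ) (ha : 4 * θ ≤ (a : ℝ)) (hb : a < b) :
    ∑ t ∈ Finset.Icc a b, ((t : ℝ) + 1) ^ (1.5 * θ) / (t : ℝ) ^ 2 ≤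
      (b : ℝ) ^ (1.5 * θ - 1) / (1.5 * θ - 1)
        + 3 * (b : ℝ) ^ (1.5 * θ - 2) / (1.5 * θ - 2)
        + 3 * (b : ℝ) ^ (1.5 * θ - 2) := by
  set s : ℝ := 1.5 * θ with hs_def
  have hs : 3 < s := by norm_num [hs_def]; linarith
  have hsa : s ≤ 3 / 8 * a := by norm_num [hs_def]; linarith
  have ha₁ : 1 ≤ a := by exact_mod_cast (show (1 : ℝ) ≤ a by linarith)
  have hb₀ : (0 : ℝ) < b := Nat.cast_pos.2 (by omega)
  have hsb : s ≤ 3 / 8 * b := hsa.trans (by gcongr)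
  have hterm (t : ℕ) (ht : t ∈ Icc a b) :
      ((t : ℝ) + 1) ^ s / (t : ℝ) ^ 2 ≤ (t : ℝ) ^ (s - 2) + 11 / 8 * s * (t : ℝ) ^ (s - 3) := by
    have hat : (a : ℝ) ≤ t := by exact_mod_cast (mem_Icc.1 ht).1
    exact add_one_rpow_div_sq_le (by linarith) (by linarith) (by linarith)
  have hsum₂ := sum_Icc_rpow_le (c := s - 2) (by linarith) ha₁ hb.le
  have hsum₃ := sum_Icc_rpow_le (c := s - 3) (by linarith) ha₁ hb.le
  rw [show s - 2 + 1 = s - 1 by ring] at hsum₂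
  rw [show s - 3 + 1 = s - 2 by ring] at hsum₃
  have hb₃ : s * (b : ℝ) ^ (s - 3) ≤ 3 / 8 * (b : ℝ) ^ (s - 2) := by
    rw [show s - 3 = s - 2 - 1 by ring, rpow_sub_one hb₀.ne', mul_div_assoc', div_le_iff₀ hb₀]
    nlinarith [rpow_nonneg hb₀.le (s - 2)]
  have hfinal := add_mul_add_div_le (by linarith) (rpow_nonneg hb₀.le (s - 2)) hb₃
  calc ∑ t ∈ Icc a b, ((t : ℝ) + 1) ^ s / (t : ℝ) ^ 2
      ≤ ∑ t ∈ Icc a b, (t : ℝ) ^ (s - 2) + 11 / 8 * s * ∑ t ∈ Icc a b, (t : ℝ) ^ (s - 3) := by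
        rw [mul_sum, ← sum_add_distrib]; exact sum_le_sum hterm
    _ ≤ ((b : ℝ) ^ (s - 2) + (b : ℝ) ^ (s - 1) / (s - 1))
          + 11 / 8 * s * ((b : ℝ) ^ (s - 3) + (b : ℝ) ^ (s - 2) / (s - 2)) := by
        gcongr
    _ ≤ _ := by linarith
end

section
/- Consider the recursion V(k+1) ≤ ((3 + ρ²)/4)·V(k) + (θ²c/μ²)·(1/k²) for k ≥ K₁, where 0 ≤ ρ < 1, θ, c, μ > 0, and K₁ ≥ 16/(1 - ρ²). If V(K₁) ≤ V̂/K₁² with V̂ := max{K₁²·V(K₁), 8θ²c/(μ²(1-ρ²))}, then V(k) ≤ V̂/k² for all k ≥ K₁. -/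
/-!
Write `δ = 1 - ρ²`, so the contraction factor is `1 - δ/4`. The choice of `V̂` makes the noise term
at most `δ V̂ / 8`, so a bound `V k ≤ V̂ / k²` propagates to `V (k+1) ≤ (1 - δ/8) V̂ / k²`; and
`(1 - δ/8) (k+1)² ≤ k²` as soon as `δ k ≥ 16`, since `δ (k+1)² / 8 ≥ 2 (k+1) > 2k + 1`.
-/

theorem le_div_sq_of_le_mul_add_div_sq {V : ℕ → ℝ} {q b W : ℝ} {K : ℕ} (hq : 0 ≤ q)
    (hrec : ∀ k ≥ K, V (k + 1) ≤ q * V k + b / (k : ℝ) ^ 2)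
    (hstep : ∀ k ≥ K, (q * W + b) / (k : ℝ) ^ 2 ≤ W / ((k : ℝ) + 1) ^ 2)
    (hinit : V K ≤ W / (K : ℝ) ^ 2) :
    ∀ k ≥ K, V k ≤ W / (k : ℝ) ^ 2 := by
  intro k hk
  induction k, hk using Nat.le_induction with
  | base => exact hinit
  | succ k hk ih =>
    calc V (k + 1) ≤ q * V k + b / (k : ℝ) ^ 2 := hrec k hk
      _ ≤ q * (W / (k : ℝ) ^ 2) + b / (k : ℝ) ^ 2 := by gcongr
      _ = (q * W + b) / (k : ℝ) ^ 2 := by ring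
      _ ≤ W / ((k + 1 : ℕ) : ℝ) ^ 2 := by push_cast; exact hstep k hk

theorem one_sub_div_eight_mul_add_one_sq_le {δ x : ℝ} (hx : 0 ≤ x) (h : 16 ≤ δ * x) :
    (1 - δ / 8) * (x + 1) ^ 2 ≤ x ^ 2 := by
  have hδ : 0 ≤ δ := by nlinarith
  nlinarith [mul_nonneg hδ (sq_nonneg (x + 1))]

theorem one_sub_div_eight_mul_div_sq_le {δ x W : ℝ} (hW : 0 ≤ W) (hx : 0 < x)
    (h : 16 ≤ δ * x) : (1 - δ / 8) * W / x ^ 2 ≤ W / (x + 1) ^ 2 := by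
  rw [div_le_div_iff₀ (by positivity) (by positivity)]
  nlinarith [mul_le_mul_of_nonneg_left (one_sub_div_eight_mul_add_one_sq_le hx.le h) hW]

theorem stmt11_general (V : ℕ → ℝ) (hVnn : ∀ k, 0 ≤ V k) (ρ θ c μ : ℝ)
    (hρ0 : 0 ≤ ρ) (hρ1 : ρ < 1)
    (K₁ : ℕ) (hK₁ : 16 / (1 - ρ ^ 2) ≤ (K₁ : ℝ))
    (hrec : ∀ k ≥ K₁, V (k + 1) ≤ (3 + ρ ^ 2) / 4 * V k + θ ^ 2 * c / μ ^ 2 * (1 / (k : ℝ) ^ 2))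
    (Vhat : ℝ) (hVhat : Vhat = max ((K₁ : ℝ) ^ 2 * V K₁) (8 * θ ^ 2 * c / (μ ^ 2 * (1 - ρ ^ 2))))
    (hinit : V K₁ ≤ Vhat / (K₁ : ℝ) ^ 2) :
    ∀ k ≥ K₁, V k ≤ Vhat / (k : ℝ) ^ 2 := by
  set δ := 1 - ρ ^ 2
  set b := θ ^ 2 * c / μ ^ 2 with hb_def
  have hδ : 0 < δ := by nlinarith
  have hVhat_nonneg : 0 ≤ Vhat := hVhat ▸ le_max_of_le_left (mul_nonneg (sq_nonneg _) (hVnn K₁))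
  have hb : b ≤ δ / 8 * Vhat := by
    have h : 8 * b / δ ≤ Vhat := by
      rw [hVhat, hb_def, mul_div_assoc', div_div, ← mul_assoc]
      exact le_max_right _ _
    rw [div_le_iff₀ hδ] at h
    linarith
  refine le_div_sq_of_le_mul_add_div_sq (q := (3 + ρ ^ 2) / 4) (b := b) (by positivity)
    (fun k hk => ?_) (fun k hk => ?_) hinit
  · simpa only [mul_one_div] using hrec k hk
  · have hk16 : 16 ≤ δ * k := by
      rw [div_le_iff₀ hδ] at hK₁
      nlinarith [(Nat.cast_le (α := ℝ)).mpr hk]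
    have hk_pos : (0 : ℝ) < k := by nlinarith
    calc ((3 + ρ ^ 2) / 4 * Vhat + b) / (k : ℝ) ^ 2 ≤ (1 - δ / 8) * Vhat / (k : ℝ) ^ 2 := by
          gcongr
          linarith
      _ ≤ Vhat / ((k : ℝ) + 1) ^ 2 := one_sub_div_eight_mul_div_sq_le hVhat_nonneg hk_pos hk16

theorem stmt11 (V : ℕ → ℝ) (hVnn : ∀ k, 0 ≤ V k) (ρ θ c μ : ℝ)
    (hρ0 : 0 ≤ ρ) (hρ1 : ρ < 1) (hθ : 0 < θ) (hc : 0 < c) (hμ : 0 < μ)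
    (K₁ : ℕ) (hK₁ : 16 / (1 - ρ ^ 2) ≤ (K₁ : ℝ))
    (hrec : ∀ k ≥ K₁, V (k + 1) ≤ (3 + ρ ^ 2) / 4 * V k + θ ^ 2 * c / μ ^ 2 * (1 / (k : ℝ) ^ 2))
    (Vhat : ℝ) (hVhat : Vhat = max ((K₁ : ℝ) ^ 2 * V K₁) (8 * θ ^ 2 * c / (μ ^ 2 * (1 - ρ ^ 2))))
    (hinit : V K₁ ≤ Vhat / (K₁ : ℝ) ^ 2) :
    ∀ k ≥ K₁, V k ≤ Vhat / (k : ℝ) ^ 2 :=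
  stmt11_general V hVnn ρ θ c μ hρ0 hρ1 K₁ hK₁ hrec Vhat hVhat hinit
end

section
/- Let U : ℕ → ℝ≥0 satisfy U(k+1) ≤ (1 - 3θ/(2k))·U(k) + a/k³ + b/k² for all k ≥ K₁, where θ > 2, a, b ≥ 0, and K₁ ≥ 4θ is an integer. Then for all k ≥ K₁: U(k) ≤ (K₁/k)^{1.5θ}·U(K₁) + (1/k^{1.5θ})·∑_{t=K₁}^{k-1} (t+1)^{1.5θ}·(b/t² + a/t³). -/
set_option maxHeartbeats 1000000

open Real Finset

theorem stmt13 (U : ℕ → ℝ) (hUnn : ∀ k, 0 ≤ U k) (θ a b : ℝ) (hθ : 2 < θ)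
    (ha : 0 ≤ a) (hb : 0 ≤ b) (K₁ : ℕ) (hK₁ : 4 * θ ≤ (K₁ : ℝ))
    (hrec : ∀ k ≥ K₁,
      U (k + 1) ≤ (1 - 3 * θ / (2 * (k : ℝ))) * U k + a / (k : ℝ) ^ 3 + b / (k : ℝ) ^ 2) :
    ∀ k ≥ K₁, U k ≤ ((K₁ : ℝ) / (k : ℝ)) ^ (1.5 * θ) * U K₁ +
      (1 / (k : ℝ) ^ (1.5 * θ)) *
        ∑ t ∈ Finset.Ico K₁ k, ((t : ℝ) + 1) ^ (1.5 * θ) * (b / (t : ℝ) ^ 2 + a / (t : ℝ) ^ 3) := by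
  have hθ0 : (0:ℝ) < θ := by linarith
  have hp1 : (1:ℝ) ≤ 1.5 * θ := by norm_num; linarith
  have hp0 : (0:ℝ) ≤ 1.5 * θ := by linarith
  have hK₁pos : (0:ℝ) < (K₁ : ℝ) := by linarith
  intro k hk
  induction k, hk using Nat.le_induction with
  | base =>
    rw [Finset.Ico_self, Finset.sum_empty, div_self (ne_of_gt hK₁pos), Real.one_rpow]
    simp
  | succ k hk ih =>
    have hkpos : (0:ℝ) < (k:ℝ) := lt_of_lt_of_le hK₁pos (by exact_mod_cast hk)
    have hk1pos : (0:ℝ) < (k:ℝ) + 1 := by linarith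
    -- coefficient
    set c : ℝ := 1 - 3 * θ / (2 * (k:ℝ)) with hc
    have hcne : 3 * θ / (2 * (k:ℝ)) ≤ 3/8 := by
      rw [div_le_iff₀ (by linarith)]
      nlinarith [hK₁pos, (show 4*θ ≤ (k:ℝ) from le_trans hK₁ (by exact_mod_cast hk))]
    have hc0 : 0 ≤ c := by rw [hc]; linarith
    -- key: c * (k+1)^p ≤ k^p
    have key : c * ((k:ℝ)+1) ^ (1.5*θ) ≤ (k:ℝ) ^ (1.5*θ) := by
      have hb1 : (1:ℝ) - (1.5*θ) / ((k:ℝ)+1) ≤ ((k:ℝ)/((k:ℝ)+1)) ^ (1.5*θ) := by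
        have := one_add_mul_self_le_rpow_one_add (s := -(1/((k:ℝ)+1))) (p := 1.5*θ)
          (by rw [neg_le, neg_neg]; rw [div_le_iff₀ hk1pos]; linarith) hp1
        have heq : (1:ℝ) + -(1/((k:ℝ)+1)) = (k:ℝ)/((k:ℝ)+1) := by field_simp; ring
        rw [heq] at this
        calc (1:ℝ) - (1.5*θ) / ((k:ℝ)+1) = 1 + 1.5*θ * -(1/((k:ℝ)+1)) := by ring
          _ ≤ _ := this
      have hcle : c ≤ 1 - (1.5*θ) / ((k:ℝ)+1) := by
        rw [hc]
        have : (1.5*θ) / ((k:ℝ)+1) ≤ 3 * θ / (2 * (k:ℝ)) := by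
          rw [div_le_div_iff₀ hk1pos (by linarith)]; nlinarith
        linarith
      calc c * ((k:ℝ)+1) ^ (1.5*θ) ≤ ((k:ℝ)/((k:ℝ)+1)) ^ (1.5*θ) * ((k:ℝ)+1) ^ (1.5*θ) := by
            apply mul_le_mul_of_nonneg_right (le_trans hcle hb1) (Real.rpow_nonneg (by linarith) _)
        _ = (k:ℝ) ^ (1.5*θ) := by
            rw [Real.div_rpow hkpos.le hk1pos.le, div_mul_cancel₀]
            exact ne_of_gt (Real.rpow_pos_of_pos hk1pos _)
    have hkp : (0:ℝ) < (k:ℝ) ^ (1.5*θ) := Real.rpow_pos_of_pos hkpos _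
    have hk1p : (0:ℝ) < ((k:ℝ)+1) ^ (1.5*θ) := Real.rpow_pos_of_pos hk1pos _
    have hsum0 : 0 ≤ ∑ t ∈ Finset.Ico K₁ k, ((t : ℝ) + 1) ^ (1.5 * θ) * (b / (t : ℝ) ^ 2 + a / (t : ℝ) ^ 3) := by
      apply Finset.sum_nonneg
      intro t ht
      have htpos : (0:ℝ) ≤ (t:ℝ) := Nat.cast_nonneg t
      apply mul_nonneg (Real.rpow_nonneg (by linarith) _)
      positivity
    have step := hrec k hk
    have main : U (k+1) ≤ c * (((K₁ : ℝ) / (k : ℝ)) ^ (1.5 * θ) * U K₁ +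
        (1 / (k : ℝ) ^ (1.5 * θ)) *
        ∑ t ∈ Finset.Ico K₁ k, ((t : ℝ) + 1) ^ (1.5 * θ) * (b / (t : ℝ) ^ 2 + a / (t : ℝ) ^ 3))
        + a / (k : ℝ) ^ 3 + b / (k : ℝ) ^ 2 := by
      have := mul_le_mul_of_nonneg_left ih hc0
      linarith
    -- now compare RHS
    rw [Finset.sum_Ico_succ_top hk]
    push_cast
    have hdiv : c * (1 / (k:ℝ) ^ (1.5*θ)) ≤ 1 / ((k:ℝ)+1) ^ (1.5*θ) := by
      rw [mul_one_div, div_le_div_iff₀ hkp hk1p, one_mul]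
      exact key
    have hdivK : c * ((K₁:ℝ)/(k:ℝ)) ^ (1.5*θ) ≤ ((K₁:ℝ)/((k:ℝ)+1)) ^ (1.5*θ) := by
      rw [Real.div_rpow hK₁pos.le hkpos.le, Real.div_rpow hK₁pos.le hk1pos.le,
        mul_div_assoc', div_le_div_iff₀ hkp hk1p]
      nlinarith [Real.rpow_nonneg hK₁pos.le (1.5*θ), key,
        mul_le_mul_of_nonneg_left key (Real.rpow_nonneg hK₁pos.le (1.5*θ))]
    have hlast : (1 / ((k:ℝ)+1) ^ (1.5*θ)) * (((k:ℝ)+1) ^ (1.5*θ) * (b / (k:ℝ)^2 + a / (k:ℝ)^3))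
        = b / (k:ℝ)^2 + a / (k:ℝ)^3 := by
      rw [one_div, inv_mul_cancel_left₀ hk1p.ne']
    have hUK : 0 ≤ U K₁ := hUnn K₁
    calc U (k+1) ≤ c * (((K₁ : ℝ) / (k : ℝ)) ^ (1.5 * θ) * U K₁) +
          c * ((1 / (k : ℝ) ^ (1.5 * θ)) * ∑ t ∈ Finset.Ico K₁ k, ((t : ℝ) + 1) ^ (1.5 * θ) * (b / (t : ℝ) ^ 2 + a / (t : ℝ) ^ 3))
          + a / (k : ℝ) ^ 3 + b / (k : ℝ) ^ 2 := by linarith [main]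
      _ ≤ ((K₁:ℝ)/((k:ℝ)+1)) ^ (1.5*θ) * U K₁ +
          (1 / ((k:ℝ)+1) ^ (1.5*θ)) * (∑ t ∈ Finset.Ico K₁ k, ((t : ℝ) + 1) ^ (1.5 * θ) * (b / (t : ℝ) ^ 2 + a / (t : ℝ) ^ 3))
          + a / (k : ℝ) ^ 3 + b / (k : ℝ) ^ 2 := by
            have h1 : c * (((K₁ : ℝ) / (k : ℝ)) ^ (1.5 * θ) * U K₁) ≤ ((K₁:ℝ)/((k:ℝ)+1)) ^ (1.5*θ) * U K₁ := by
              rw [← mul_assoc]; exact mul_le_mul_of_nonneg_right hdivK hUK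
            have h2 : c * ((1 / (k : ℝ) ^ (1.5 * θ)) * ∑ t ∈ Finset.Ico K₁ k, ((t : ℝ) + 1) ^ (1.5 * θ) * (b / (t : ℝ) ^ 2 + a / (t : ℝ) ^ 3)) ≤ (1 / ((k:ℝ)+1) ^ (1.5*θ)) * ∑ t ∈ Finset.Ico K₁ k, ((t : ℝ) + 1) ^ (1.5 * θ) * (b / (t : ℝ) ^ 2 + a / (t : ℝ) ^ 3) := by
              rw [← mul_assoc]; exact mul_le_mul_of_nonneg_right hdiv hsum0
            linarith
      _ = ((K₁:ℝ)/((k:ℝ)+1)) ^ (1.5*θ) * U K₁ +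
          (1 / ((k:ℝ)+1) ^ (1.5*θ)) * ((∑ t ∈ Finset.Ico K₁ k, ((t : ℝ) + 1) ^ (1.5 * θ) * (b / (t : ℝ) ^ 2 + a / (t : ℝ) ^ 3)) + ((k:ℝ)+1) ^ (1.5*θ) * (b / (k:ℝ)^2 + a / (k:ℝ)^3)) := by
            rw [mul_add, hlast]; ring
end

section
/- Suppose a real sequence y(k) satisfies y(k) ≥ (θρ^k/k^{2θ})·∑_{t=K}^{k-1} (t+1)^{2θ-1}/ρ^t for k > K, where θ > 2, K = ⌈2θ⌉, and ρ ∈ (0,1). Then for all k ≥ 4θ/(-ln ρ), the integral bound ∫_{K-1}^{k-1} (t+1)^{2θ-1}/ρ^t dt ≥ k^{2θ-1}/(2(-ln ρ)ρ^{k-1}) holds, and consequently y(k) ≥ θρ/(2(-ln ρ)k). -/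
/-!
Write `L = -log ρ`, so that `1 / ρ ^ t = exp (L t)`. By convexity of `x ↦ x ^ (2θ-1)`, on the whole
interval the integrand is at least `k ^ (2θ-1) (1 - L (k-1-t) / 2) exp (L t)`, since the slope
`(2θ-1) / k` of the tangent line is below `L / 2` once `L k ≥ 4θ`. This minorant integrates in
closed form to at least `k ^ (2θ-1) exp (L (k-1)) / (2L)`, as long as the interval has length at
least `1 / L`. The sum dominates the integral because the integrand is increasing, and the bound on
`y k` follows after multiplying by `θ ρ ^ k / k ^ (2θ)`.
-/

open Real Set

lemma rpow_mul_one_sub_le_rpow {x y p : ℝ} (hx : 0 ≤ x) (hy : 0 < y)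
    (hp : 1 ≤ p) : y ^ p * (1 - p * (y - x) / y) ≤ x ^ p := by
  have hbern := one_add_mul_self_le_rpow_one_add
    (show -1 ≤ (x - y) / y by rw [le_div_iff₀ hy]; linarith) hp
  rw [show 1 + (x - y) / y = x / y by field_simp; ring, div_rpow hx hy.le,
    le_div_iff₀ (rpow_pos_of_pos hy p)] at hbern
  calc y ^ p * (1 - p * (y - x) / y) = (1 + p * ((x - y) / y)) * y ^ p := by ring
    _ ≤ x ^ p := hbern

lemma le_integral_rpow_mul_exp {p L a b : ℝ} (hp : 1 ≤ p) (hL : 0 < L) (ha : 0 ≤ a + 1)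
    (hab : 1 ≤ L * (b - a)) (hpb : 2 * p ≤ L * (b + 1)) :
    (b + 1) ^ p * exp (L * b) / (2 * L) ≤ ∫ t in a..b, (t + 1) ^ p * exp (L * t) := by
  have hab_le : a ≤ b := by
    by_contra! h
    nlinarith
  have hb : 0 < b + 1 := by nlinarith
  set G : ℝ → ℝ := fun t => (1 / (2 * L) - (b - t) / 2) * exp (L * t)
  set g : ℝ → ℝ := fun t => (1 - L * (b - t) / 2) * exp (L * t)
  have hG : ∀ t, HasDerivAt G (g t) t := by
    intro t
    have hlin : HasDerivAt (fun s => 1 / (2 * L) - (b - s) / 2) (1 / 2) t :=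
      ((((hasDerivAt_id' t).const_sub b).div_const 2).const_sub _).congr_deriv (by ring)
    have hexp : HasDerivAt (fun s => exp (L * s)) (exp (L * t) * L) t := by
      simpa using ((hasDerivAt_id t).const_mul L).exp
    exact (hlin.mul hexp).congr_deriv (by simp only [g]; field_simp; ring)
  have hg_cont : Continuous g := by fun_prop
  have hf_cont : ContinuousOn (fun t => (t + 1) ^ p * exp (L * t)) (uIcc a b) := by
    refine ContinuousOn.mul ?_ (by fun_prop)
    exact (continuous_id.add continuous_const).continuousOn.rpow_const
      fun _ _ => Or.inr (by linarith)
  have hminorant : ∀ t ∈ Icc a b, (b + 1) ^ p * g t ≤ (t + 1) ^ p * exp (L * t) := by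
    rintro t ⟨hat, htb⟩
    have hslope : p * (b - t) / (b + 1) ≤ L * (b - t) / 2 := by
      rw [div_le_div_iff₀ hb two_pos]
      nlinarith [mul_le_mul_of_nonneg_left hpb (sub_nonneg.2 htb)]
    have htangent := rpow_mul_one_sub_le_rpow (by linarith : 0 ≤ t + 1) hb hp
    rw [show b + 1 - (t + 1) = b - t by ring] at htangent
    calc (b + 1) ^ p * g t = (b + 1) ^ p * (1 - L * (b - t) / 2) * exp (L * t) := by ring
      _ ≤ (b + 1) ^ p * (1 - p * (b - t) / (b + 1)) * exp (L * t) := by gcongr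
      _ ≤ (t + 1) ^ p * exp (L * t) := by gcongr
  have hGa : G a ≤ 0 := by
    refine mul_nonpos_of_nonpos_of_nonneg ?_ (exp_pos _).le
    rw [sub_nonpos, div_le_div_iff₀ (by positivity) two_pos]
    linarith
  calc (b + 1) ^ p * exp (L * b) / (2 * L) = (b + 1) ^ p * G b := by simp only [G]; ring
    _ ≤ (b + 1) ^ p * (G b - G a) := by gcongr; linarith
    _ = ∫ t in a..b, (b + 1) ^ p * g t := by
      rw [intervalIntegral.integral_const_mul, intervalIntegral.integral_eq_sub_of_hasDerivAt
        (fun t _ => hG t) (hg_cont.intervalIntegrable a b)]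
    _ ≤ ∫ t in a..b, (t + 1) ^ p * exp (L * t) :=
      intervalIntegral.integral_mono_on hab_le ((hg_cont.intervalIntegrable a b).const_mul _)
        (hf_cont.intervalIntegrable) hminorant

lemma le_integral_rpow_div_rpow {p ρ a b : ℝ} (hp : 1 ≤ p) (hρ0 : 0 < ρ) (hρ1 : ρ < 1)
    (ha : 0 ≤ a + 1) (hab : 1 ≤ -log ρ * (b - a)) (hpb : 2 * p ≤ -log ρ * (b + 1)) :
    (b + 1) ^ p / (2 * -log ρ * ρ ^ b) ≤ ∫ t in a..b, (t + 1) ^ p / ρ ^ t := by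
  have hexp : ∀ x t, x / ρ ^ t = x * exp (-log ρ * t) := fun x t => by
    rw [rpow_def_of_pos hρ0, neg_mul, exp_neg, div_eq_mul_inv]
  simp_rw [hexp]
  calc (b + 1) ^ p / (2 * -log ρ * ρ ^ b) = (b + 1) ^ p / ρ ^ b / (2 * -log ρ) := by ring
    _ ≤ _ := by
      rw [hexp]
      exact le_integral_rpow_mul_exp hp (neg_pos.2 (log_neg hρ0 hρ1)) ha hab hpb

lemma monotoneOn_rpow_div_rpow {p ρ : ℝ} (hp : 0 ≤ p) (hρ0 : 0 < ρ) (hρ1 : ρ ≤ 1) :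
    MonotoneOn (fun t => (t + 1) ^ p / ρ ^ t) (Ici (-1)) := by
  intro s hs t _ hst
  have hs1 : 0 ≤ s + 1 := by linarith [mem_Ici.1 hs]
  exact div_le_div₀ (rpow_nonneg (by linarith) p) (rpow_le_rpow hs1 (by linarith) hp)
    (rpow_pos_of_pos hρ0 t) (rpow_le_rpow_of_exponent_ge hρ0 hρ1 hst)

lemma integral_le_sum_Ico_of_monotoneOn {f : ℝ → ℝ} {a b : ℕ} (hab : a ≤ b)
    (hf : MonotoneOn f (Icc ((a : ℝ) - 1) ((b : ℝ) - 1))) :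
    ∫ t in (a : ℝ) - 1..(b : ℝ) - 1, f t ≤ ∑ i ∈ Finset.Ico a b, f i := by
  rw [← intervalIntegral.integral_comp_sub_right]
  refine (MonotoneOn.integral_le_sum_Ico hab fun s hs t ht hst => ?_).trans_eq ?_
  · exact hf ⟨by linarith [hs.1], by linarith [hs.2]⟩ ⟨by linarith [ht.1], by linarith [ht.2]⟩
      (by linarith)
  · simp

theorem stmt15 (y : ℕ → ℝ) (θ ρ : ℝ) (hθ : 2 < θ) (hρ0 : 0 < ρ) (hρ1 : ρ < 1)
    (K : ℕ) (hK : K = ⌈2 * θ⌉₊)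
    (h : ∀ k > K,
      θ * ρ ^ k / (k : ℝ) ^ (2 * θ) *
          ∑ t ∈ Finset.Ico K k, ((t : ℝ) + 1) ^ (2 * θ - 1) / ρ ^ t ≤ y k) :
    ∀ k : ℕ, k > K → 4 * θ / (-Real.log ρ) ≤ (k : ℝ) →
      ((k : ℝ) ^ (2 * θ - 1) / (2 * (-Real.log ρ) * ρ ^ ((k : ℝ) - 1)) ≤
          ∫ t in ((K : ℝ) - 1)..((k : ℝ) - 1), (t + 1) ^ (2 * θ - 1) / ρ ^ t) ∧
        θ * ρ / (2 * (-Real.log ρ) * (k : ℝ)) ≤ y k := by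
  intro k hk hk4
  set L := -log ρ
  have hL : 0 < L := neg_pos.2 (log_neg hρ0 hρ1)
  have hKl : 2 * θ ≤ K := hK ▸ Nat.le_ceil _
  have hKu : (K : ℝ) < 2 * θ + 1 := hK ▸ Nat.ceil_lt_add_one (by positivity)
  have hkK : (K : ℝ) + 1 ≤ k := by exact_mod_cast hk
  have hLk : 4 * θ ≤ L * k := (div_le_iff₀' hL).1 hk4
  have hgap : 1 ≤ L * ((k - 1) - (K - 1)) := by
    rcases le_or_gt 1 L with hL1 | hL1 <;> nlinarith
  have hint := le_integral_rpow_div_rpow (p := 2 * θ - 1) (a := K - 1) (b := k - 1)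
    (by linarith) hρ0 hρ1 (by simp) hgap (by rw [sub_add_cancel]; linarith)
  rw [sub_add_cancel] at hint
  refine ⟨hint, ?_⟩
  have hsum := integral_le_sum_Ico_of_monotoneOn hk.le
    ((monotoneOn_rpow_div_rpow (p := 2 * θ - 1) (by linarith) hρ0 hρ1.le).mono
      fun t ht => show -1 ≤ t by linarith [ht.1, (Nat.cast_nonneg K : (0 : ℝ) ≤ K)])
  simp only [rpow_natCast] at hsum
  have hk0 : (0 : ℝ) < k := by linarith
  calc θ * ρ / (2 * L * k)
      = θ * ρ ^ k / (k : ℝ) ^ (2 * θ) * ((k : ℝ) ^ (2 * θ - 1) / (2 * L * ρ ^ ((k : ℝ) - 1))) := by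
        rw [rpow_sub hρ0, rpow_sub hk0, rpow_one, rpow_one, rpow_natCast]
        field_simp
    _ ≤ θ * ρ ^ k / (k : ℝ) ^ (2 * θ) *
          ∑ t ∈ Finset.Ico K k, ((t : ℝ) + 1) ^ (2 * θ - 1) / ρ ^ t := by
        gcongr
        exact hint.trans hsum
    _ ≤ y k := h k hk
end
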